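/- Let d = (d_1,...,d_h) with 1 ≤ d_1 ≤ ... ≤ d_h, σ = Σ_{i=1}^h(d_i-1), and D < σ. With φ_m defined as the difference of Hilbert functions HF(S̄/(x^d); m) - HF(S̄/L(d;m-1); m) for 2 ≤ m ≤ σ (and 0 otherwise), one has Σ_{m=D+1}^σ φ_m ≥ σ - D; consequently Π_{i=1}^h d_i - Σ_{m=D+1}^σ φ_m - 1 ≤ Π_{i=1}^h d_i - σ + D - 1 (the bound of Theorem THM multiplicity improves the Engheta–Huneke–Mantero–McCullough–Seceleanu bound). -/

import Mathlib

open MvPolynomial Finsupp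

variable {k : Type} [Field k]

/-- Hilbert function of `S/I` in degree `m`, where `S = k[x_1,...,x_n]`. -/
noncomputable def HF {n : ℕ} (I : Ideal (MvPolynomial (Fin n) k)) (m : ℕ) : ℕ :=
  Module.finrank k
    ((homogeneousSubmodule (Fin n) k m).map (Ideal.Quotient.mkₐ k I).toLinearMap)

/-- The ideal `(x_1^{d_1},...,x_h^{d_h})` inside `k[x_1,...,x_n]`. -/
noncomputable def pows {n h : ℕ} (hh : h ≤ n) (d : Fin h → ℕ) :
    Ideal (MvPolynomial (Fin n) k) :=
  Ideal.span (Set.range fun i : Fin h => (X (Fin.castLE hh i) : MvPolynomial (Fin n) k) ^ d i)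

/-- `u` is the exponent vector of the lexicographically largest monomial of degree `D`
not belonging to the ideal `I` (convention `x_1 > x_2 > ... > x_n`). -/
def IsLexLargestNonmember {n : ℕ} (I : Ideal (MvPolynomial (Fin n) k)) (D : ℕ)
    (u : Fin n →₀ ℕ) : Prop :=
  (∑ i, u i) = D ∧ (monomial u (1 : k)) ∉ I ∧
    ∀ v : Fin n →₀ ℕ, (∑ i, v i) = D → (monomial v (1 : k)) ∉ I → toLex v ≤ toLex u

/-- Hilbert–Samuel (cumulative Hilbert) function of `S/I`. -/
noncomputable def cumHF {n : ℕ} (I : Ideal (MvPolynomial (Fin n) k)) (m : ℕ) : ℤ :=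
  ∑ j ∈ Finset.range (m + 1), (HF I j : ℤ)

/-- Forward difference operator. -/
def diffOp (f : ℕ → ℤ) : ℕ → ℤ := fun m => f (m + 1) - f m

/-- The multiplicity `e(S/I)`, where `t = dim S/I`: the eventual (constant) value of the
`t`-th finite difference of the Hilbert–Samuel function of `S/I`. -/
noncomputable def mult {n : ℕ} (I : Ideal (MvPolynomial (Fin n) k)) (t : ℕ) : ℤ :=
  Filter.limsup (diffOp^[t] (cumHF I)) Filter.atTop

/-- The height of an ideal: the infimum of heights of primes containing it. -/
noncomputable def idealHeight {n : ℕ} (I : Ideal (MvPolynomial (Fin n) k)) : ℕ∞ :=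
  ⨅ (P : PrimeSpectrum (MvPolynomial (Fin n) k)) (_ : I ≤ P.asIdeal), Order.height P

/-- A homogeneous ideal. -/
def IsHomogeneousIdeal {n : ℕ} (I : Ideal (MvPolynomial (Fin n) k)) : Prop :=
  ∀ f ∈ I, ∀ m : ℕ, homogeneousComponent m f ∈ I

/-- Hilbert function of the graded submodule `a/f` of `S/f` in degree `m`. -/
noncomputable def HFsub {n : ℕ} (f a : Ideal (MvPolynomial (Fin n) k)) (m : ℕ) : ℕ :=
  Module.finrank k
    ((Submodule.map (Ideal.Quotient.mkₐ k f).toLinearMap (homogeneousSubmodule (Fin n) k m)) ⊓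
      (Submodule.map (Ideal.Quotient.mkₐ k f).toLinearMap (Submodule.restrictScalars k a)) :
      Submodule k (MvPolynomial (Fin n) k ⧸ f))

/-- The paper's `φ_m`: the difference `HF(S̄/(x^d); m) - HF(S̄/L(d;m-1); m)`, where
`L(d;m-1) = (x^d) + (U_{m-1})` and `U` is a family of lex-largest nonmember exponent vectors. -/
noncomputable def phi {k : Type} [Field k] {h : ℕ} (d : Fin h → ℕ) (U : ℕ → (Fin h →₀ ℕ))
    (m : ℕ) : ℕ :=
  HF (pows (k := k) le_rfl d) m -
    HF (pows (k := k) le_rfl d ⊔ Ideal.span {monomial (U (m - 1)) (1 : k)}) m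

/-! The point is that `φ_m ≥ 1` for `1 ≤ m ≤ σ`. The exponent vector `u = U_{m-1}` is a
standard monomial of `k[x]/(x^d)` of degree `m - 1 < σ = ∑ (d_i - 1)`, so some `u_i + 1 < d_i`,
and then `x^u x_i` is a monomial of degree `m` lying in `L(d;m-1)` but not in `(x^d)`; hence the
Hilbert function of `k[x]/L(d;m-1)` is strictly smaller in degree `m`. Summing over
`D < m ≤ σ` gives the bound. -/

theorem Submodule.finrank_map_lt_of_mem_ker {K V W : Type*} [DivisionRing K] [AddCommGroup V]
    [Module K V] [AddCommGroup W] [Module K W] (f : V →ₗ[K] W) {p : Submodule K V}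
    [FiniteDimensional K p] {v : V} (hvp : v ∈ p) (hv : v ≠ 0) (hfv : f v = 0) :
    Module.finrank K (p.map f) < Module.finrank K p := by
  have hrange : p.map f = LinearMap.range (f.comp p.subtype) := by
    rw [LinearMap.range_comp, Submodule.range_subtype]
  have hker : 0 < Module.finrank K (LinearMap.ker (f.comp p.subtype)) := by
    refine Submodule.one_le_finrank_iff.mpr fun hbot => hv ?_
    have : (⟨v, hvp⟩ : p) ∈ LinearMap.ker (f.comp p.subtype) := hfv
    simpa [hbot] using this
  have := LinearMap.finrank_range_add_finrank_ker (f.comp p.subtype)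
  rw [hrange]
  omega

instance MvPolynomial.finiteDimensional_homogeneousSubmodule (σ : Type*) [Finite σ] (m : ℕ) :
    FiniteDimensional k (homogeneousSubmodule σ k m) :=
  Submodule.finiteDimensional_of_le fun _ hp =>
    (mem_restrictTotalDegree σ m _).mpr ((mem_homogeneousSubmodule m _).mp hp).totalDegree_le

theorem HF_lt_of_le_of_mem {n : ℕ} {I J : Ideal (MvPolynomial (Fin n) k)} (hIJ : I ≤ J) {m : ℕ}
    {w : MvPolynomial (Fin n) k} (hw : w.IsHomogeneous m) (hwJ : w ∈ J) (hwI : w ∉ I) :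
    HF J m < HF I m := by
  have hmap : (homogeneousSubmodule (Fin n) k m).map (Ideal.Quotient.mkₐ k J).toLinearMap =
      ((homogeneousSubmodule (Fin n) k m).map (Ideal.Quotient.mkₐ k I).toLinearMap).map
        (Ideal.Quotient.factorₐ k hIJ).toLinearMap := by
    rw [← Submodule.map_comp, ← AlgHom.comp_toLinearMap, Ideal.Quotient.factorₐ_comp_mk]
  rw [HF, HF, hmap]
  exact Submodule.finrank_map_lt_of_mem_ker _ (Submodule.mem_map_of_mem hw)
    (by simpa [Ideal.Quotient.eq_zero_iff_mem] using hwI)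
    (by simpa [Ideal.Quotient.eq_zero_iff_mem] using hwJ)

theorem monomial_mem_pows_iff {n h : ℕ} (hh : h ≤ n) (d : Fin h → ℕ) (u : Fin n →₀ ℕ) :
    monomial u (1 : k) ∈ pows hh d ↔ ∃ i, d i ≤ u (Fin.castLE hh i) := by
  have hspan : pows (k := k) hh d = Ideal.span ((fun s => monomial s (1 : k)) ''
      Set.range fun i => Finsupp.single (Fin.castLE hh i) (d i)) := by
    rw [pows, ← Set.range_comp]
    simp only [Function.comp_def, X_pow_eq_monomial]
  classical
  simp [hspan, mem_ideal_span_monomial_image, support_monomial, Finsupp.single_le_iff]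

theorem exists_add_one_lt_of_sum_lt_sum_sub_one {ι : Type*} [Fintype ι] {u d : ι → ℕ}
    (hlt : ∑ i, u i < ∑ i, (d i - 1)) : ∃ i, u i + 1 < d i := by
  by_contra! hge
  exact hlt.not_ge (Finset.sum_le_sum fun i _ => by have := hge i; omega)

theorem HF_sup_span_monomial_lt {h : ℕ} (d : Fin h → ℕ) {u : Fin h →₀ ℕ}
    (hu : monomial u (1 : k) ∉ pows le_rfl d) (hdeg : ∑ i, u i < ∑ i, (d i - 1)) :
    HF (pows le_rfl d ⊔ Ideal.span {monomial u (1 : k)}) (∑ i, u i + 1) <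
      HF (pows (k := k) le_rfl d) (∑ i, u i + 1) := by
  obtain ⟨i, hi⟩ := exists_add_one_lt_of_sum_lt_sum_sub_one hdeg
  have hmul : monomial (u + single i 1) (1 : k) = monomial u 1 * X i := by
    rw [X, monomial_mul, one_mul]
  refine HF_lt_of_le_of_mem le_sup_left (w := monomial (u + single i 1) (1 : k))
    (isHomogeneous_monomial _ ?_) ?_ ?_
  · rw [map_add, degree_single, degree_eq_sum]
  · exact Ideal.mem_sup_right (hmul ▸ Ideal.mul_mem_right _ _ (Ideal.mem_span_singleton_self _))
  · simp only [monomial_mem_pows_iff, Fin.castLE_refl, not_exists, not_le] at hu ⊢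
    intro j
    rcases eq_or_ne j i with rfl | hji
    · simpa using hi
    · simpa [single_eq_of_ne hji] using hu j

theorem one_le_phi {h : ℕ} (d : Fin h → ℕ) (U : ℕ → (Fin h →₀ ℕ)) {m : ℕ} (hm : 1 ≤ m)
    (hmσ : m ≤ ∑ i, (d i - 1))
    (hU : IsLexLargestNonmember (pows (k := k) le_rfl d) (m - 1) (U (m - 1))) :
    1 ≤ phi (k := k) d U m := by
  obtain ⟨hdeg, hnotMem, -⟩ := hU
  have := HF_sup_span_monomial_lt d hnotMem (by omega)
  rw [hdeg, Nat.sub_add_cancel hm] at this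
  rw [phi]
  omega

theorem stmt15_general {k : Type} [Field k] {h : ℕ} (d : Fin h → ℕ) (D : ℕ)
    (U : ℕ → (Fin h →₀ ℕ))
    (hU : ∀ m, m ≤ ∑ i, (d i - 1) →
      IsLexLargestNonmember (pows (k := k) le_rfl d) m (U m)) :
    (∑ i, (d i - 1)) - D ≤
        ∑ m ∈ Finset.Icc (D + 1) (∑ i, (d i - 1)), phi (k := k) d U m ∧
      (∏ i, (d i : ℤ)) -
          (∑ m ∈ Finset.Icc (D + 1) (∑ i, (d i - 1)), (phi (k := k) d U m : ℤ)) - 1 ≤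
        (∏ i, (d i : ℤ)) - (∑ i, (d i - 1) : ℕ) + D - 1 := by
  set σ := ∑ i, (d i - 1)
  have hsum : σ - D ≤ ∑ m ∈ Finset.Icc (D + 1) σ, phi (k := k) d U m := by
    have := Finset.card_nsmul_le_sum (Finset.Icc (D + 1) σ) (phi (k := k) d U) 1 fun m hm => by
      rw [Finset.mem_Icc] at hm
      exact one_le_phi d U (by omega) hm.2 (hU (m - 1) (by omega))
    simpa using this
  refine ⟨hsum, ?_⟩
  push_cast [← Nat.cast_sum]
  omega

theorem stmt15 {k : Type} [Field k] {h : ℕ} (d : Fin h → ℕ) (hd1 : ∀ i, 1 ≤ d i)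
    (hmono : Monotone d) (D : ℕ) (hD1 : 1 ≤ D) (hD : D < ∑ i, (d i - 1))
    (U : ℕ → (Fin h →₀ ℕ))
    (hU : ∀ m, m ≤ ∑ i, (d i - 1) →
      IsLexLargestNonmember (pows (k := k) le_rfl d) m (U m)) :
    (∑ i, (d i - 1)) - D ≤
        ∑ m ∈ Finset.Icc (D + 1) (∑ i, (d i - 1)), phi (k := k) d U m ∧
      (∏ i, (d i : ℤ)) -
          (∑ m ∈ Finset.Icc (D + 1) (∑ i, (d i - 1)), (phi (k := k) d U m : ℤ)) - 1 ≤
        (∏ i, (d i : ℤ)) - (∑ i, (d i - 1) : ℕ) + D - 1 :=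
  stmt15_general d D U hU
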